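/- Fix m ∈ ℝ and γ ∈ ℝ with γ ≠ 0. Let C₃(b) = (1-b₁²)b₂ - b₁²m² - b₃² and G_red(b) = b₂ + m² - γ²(1-b₁²) on ℝ³. Then for a point b ∈ ℝ³ satisfying C₃(b) = 0, b₂ ≥ 0 and b₁² ≤ 1, the gradients ∇C₃(b) and ∇G_red(b) are parallel (i.e. their cross product vanishes) if and only if b = (0,0,0), or m = 0 and b = (±1, 0, 0). Consequently the set of critical values of the energy–momentum map (L_z, G) consists exactly of the parabola g = m² - γ² (from the critical points b = (0,0,0)) and the isolated critical value (m,g) = (0,0) (from the singular points (±1,0,0) of P₀). -/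

import Mathlib

noncomputable section

/-- The cross product in `ℝ³`. -/
def cross3 (v w : Fin 3 → ℝ) : Fin 3 → ℝ :=
  ![v 1 * w 2 - v 2 * w 1, v 2 * w 0 - v 0 * w 2, v 0 * w 1 - v 1 * w 0]

/-- `ℝ³` (`b`-space) as a Euclidean space. -/
abbrev E3 := EuclideanSpace ℝ (Fin 3)

/-- Package a triple of reals as a point of `E3`. -/
def toE3 (v : Fin 3 → ℝ) : E3 := WithLp.toLp 2 v

/-- `C₃(b) = (1-b₁²)b₂ - b₁²m² - b₃²`. -/
def C3fun (m : ℝ) : E3 → ℝ := fun b =>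
  (1 - (b 0) ^ 2) * b 1 - (b 0) ^ 2 * m ^ 2 - (b 2) ^ 2

/-- The reduced Hamiltonian `G_red(b) = b₂ + m² - γ²(1-b₁²)`. -/
def Gredfun (m γ : ℝ) : E3 → ℝ := fun b => b 1 + m ^ 2 - γ ^ 2 * (1 - (b 0) ^ 2)

/-!
A critical point has `b₃ = 0` and `b₁ (b₂ + m² + γ²(1 - b₁²)) = 0`. On the reduced phase space the
second factor is a sum of three nonnegative terms, so it vanishes only when `b₂ = m = 0` and
`γ²(1 - b₁²) = 0`, i.e. `b₁ = ±1`; otherwise `b₁ = 0`, and then the constraint `C₃ = 0` forces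
`b₂ = 0`.
-/

lemma cross3_eq_zero_iff (v w : Fin 3 → ℝ) :
    cross3 v w = 0 ↔
      v 1 * w 2 - v 2 * w 1 = 0 ∧ v 2 * w 0 - v 0 * w 2 = 0 ∧ v 0 * w 1 - v 1 * w 0 = 0 := by
  simp only [cross3, funext_iff, Fin.forall_fin_succ, IsEmpty.forall_iff, Pi.zero_apply,
    Matrix.cons_val_zero, Matrix.cons_val_succ, and_true]

lemma toDual_toE3_apply (v : Fin 3 → ℝ) (x : E3) :
    InnerProductSpace.toDual ℝ E3 (toE3 v) x = v 0 * x 0 + v 1 * x 1 + v 2 * x 2 := by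
  simp [toE3, PiLp.inner_apply, Fin.sum_univ_three, mul_comm]

lemma hasGradientAt_C3fun (m : ℝ) (b : E3) :
    HasGradientAt (C3fun m)
      (toE3 ![-2 * b 0 * b 1 - 2 * b 0 * m ^ 2, 1 - b 0 ^ 2, -2 * b 2]) b := by
  rw [hasGradientAt_iff_hasFDerivAt]
  have h0 := (EuclideanSpace.proj (𝕜 := ℝ) (0 : Fin 3)).hasFDerivAt (x := b)
  have h1 := (EuclideanSpace.proj (𝕜 := ℝ) (1 : Fin 3)).hasFDerivAt (x := b)
  have h2 := (EuclideanSpace.proj (𝕜 := ℝ) (2 : Fin 3)).hasFDerivAt (x := b)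
  have h := (((h0.mul h0).const_sub 1).mul h1).sub
    (((h0.mul h0).mul_const (m ^ 2)).add (h2.mul h2))
  refine (h.congr_of_eventuallyEq (.of_forall fun x => ?_)).congr_fderiv ?_
  · simp only [C3fun, Pi.sub_apply, Pi.add_apply, Pi.mul_apply, PiLp.proj_apply]
    ring
  · ext x
    simp only [toDual_toE3_apply, sub_apply, add_apply, neg_apply, smul_apply, smul_eq_mul,
      PiLp.proj_apply, Pi.mul_apply, EuclideanSpace.coe_proj, Matrix.cons_val_zero,
      Matrix.cons_val_one, Matrix.cons_val_two, Matrix.tail_cons, Matrix.head_cons]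
    ring

lemma hasGradientAt_Gredfun (m γ : ℝ) (b : E3) :
    HasGradientAt (Gredfun m γ) (toE3 ![2 * γ ^ 2 * b 0, 1, 0]) b := by
  rw [hasGradientAt_iff_hasFDerivAt]
  have h0 := (EuclideanSpace.proj (𝕜 := ℝ) (0 : Fin 3)).hasFDerivAt (x := b)
  have h1 := (EuclideanSpace.proj (𝕜 := ℝ) (1 : Fin 3)).hasFDerivAt (x := b)
  have h := (h1.add_const (m ^ 2)).sub (((h0.mul h0).const_sub 1).const_mul (γ ^ 2))
  refine (h.congr_of_eventuallyEq (.of_forall fun x => ?_)).congr_fderiv ?_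
  · simp only [Gredfun, Pi.sub_apply, Pi.mul_apply, PiLp.proj_apply]
    ring
  · ext x
    simp only [toDual_toE3_apply, sub_apply, add_apply, neg_apply, smul_apply, smul_eq_mul,
      PiLp.proj_apply, Matrix.cons_val_zero, Matrix.cons_val_one, Matrix.cons_val_two,
      Matrix.tail_cons, Matrix.head_cons]
    ring

lemma critical_eqns_iff_of_constraint {m γ x y z : ℝ} (hγ : γ ≠ 0)
    (hC : (1 - x ^ 2) * y - x ^ 2 * m ^ 2 - z ^ 2 = 0) (hy : 0 ≤ y) (hx : x ^ 2 ≤ 1) :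
    z = 0 ∧ x * (y + m ^ 2 + γ ^ 2 * (1 - x ^ 2)) = 0 ↔
      (x = 0 ∧ y = 0 ∧ z = 0) ∨ (m = 0 ∧ (x = 1 ∨ x = -1) ∧ y = 0 ∧ z = 0) := by
  constructor
  · rintro ⟨rfl, hprod⟩
    rcases mul_eq_zero.1 hprod with rfl | hsum
    · left
      exact ⟨rfl, by linear_combination hC, rfl⟩
    · have hm : 0 ≤ m ^ 2 := sq_nonneg m
      have hγx : 0 ≤ γ ^ 2 * (1 - x ^ 2) := mul_nonneg (sq_nonneg γ) (by linarith)
      have hx1 : x ^ 2 = 1 := by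
        have : γ ^ 2 * (1 - x ^ 2) = 0 := by linarith
        linarith [(mul_eq_zero.1 this).resolve_left (pow_ne_zero 2 hγ)]
      right
      exact ⟨pow_eq_zero_iff two_ne_zero |>.1 (by linarith), sq_eq_one_iff.1 hx1, by linarith, rfl⟩
  · rintro (⟨rfl, -, rfl⟩ | ⟨rfl, rfl | rfl, rfl, rfl⟩) <;> norm_num

/-- On the reduced phase space (`C₃ = 0`, `b₂ ≥ 0`, `b₁² ≤ 1`, with `γ ≠ 0`), the
gradients `∇C₃` and `∇G_red` are parallel iff `b = (0,0,0)`, or `m = 0` and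
`b = (±1,0,0)`. The corresponding critical values of `(L_z, G)` are the parabola
`g = m² - γ²` (from `b = 0`) and the isolated value `(0,0)` (from `(±1,0,0)`). -/
theorem critical_points_reduced (m γ : ℝ) (hγ : γ ≠ 0) (b : E3)
    (hC : C3fun m b = 0) (hb2 : 0 ≤ b 1) (hb1 : (b 0) ^ 2 ≤ 1) :
    (cross3 (fun i => gradient (C3fun m) b i) (fun i => gradient (Gredfun m γ) b i) = 0 ↔
      ((b 0 = 0 ∧ b 1 = 0 ∧ b 2 = 0) ∨
        (m = 0 ∧ (b 0 = 1 ∨ b 0 = -1) ∧ b 1 = 0 ∧ b 2 = 0))) ∧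
    Gredfun m γ (0 : E3) = m ^ 2 - γ ^ 2 ∧
    (m = 0 → Gredfun m γ (toE3 ![1, 0, 0]) = 0 ∧ Gredfun m γ (toE3 ![-1, 0, 0]) = 0) := by
  refine ⟨?_, by simp [Gredfun], fun hm => by simp [Gredfun, toE3, hm]⟩
  rw [(hasGradientAt_C3fun m b).gradient, (hasGradientAt_Gredfun m γ b).gradient,
    cross3_eq_zero_iff, ← critical_eqns_iff_of_constraint hγ hC hb2 hb1]
  simp only [toE3, Matrix.cons_val_zero, Matrix.cons_val_one, Matrix.cons_val_two, Matrix.tail_cons,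
    Matrix.head_cons]
  constructor
  · rintro ⟨h0, -, h2⟩
    exact ⟨by linear_combination h0 / 2, by linear_combination -h2 / 2⟩
  · rintro ⟨hz, h⟩
    exact ⟨by linear_combination 2 * hz, by linear_combination -4 * γ ^ 2 * b 0 * hz,
      by linear_combination -2 * h⟩
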